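/- Let β ≤ 0 and α > 1. If f(z) = z + Σ_{k≥2} a_k z^k is analytic on the unit disk and Σ_{k≥2} [α + β + k(1-β)] |a_k| < α - 1, then Re(z f'(z)/f(z)) < β |z f'(z)/f(z) - 1| + α for all z in the unit disk. -/

import Mathlib

/-!
Write `f z = z + g z` with `g z = ∑ aₖ zᵏ`. Then `z f' z - f z = ∑ (k - 1) aₖ zᵏ =: N`, so
`w := z f' / f = 1 + N / f`, and since `Re w - 1 ≤ |w - 1|` it suffices that
`(1 - β) |N| < (α - 1) |f|`. For `|z| = t < 1` we have `|N| ≤ t ∑ (k - 1) |aₖ|` and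
`|g| ≤ t ∑ |aₖ|`; as `(1 - β) (k - 1) + (α - 1) ≤ α + β + k (1 - β)`, the hypothesis gives
`(1 - β) |N| + (α - 1) |g| < (α - 1) t ≤ (α - 1) (|f| + |g|)`.
-/

open Complex Metric

section

variable {𝕜 : Type*} [RCLike 𝕜] {a : ℕ → 𝕜} {z : 𝕜} {α β : ℝ}

theorem summable_norm_of_summable_nat_mul_norm {E : Type*} [SeminormedAddCommGroup E]
    {c : ℕ → E} (hc0 : c 0 = 0) (hc : Summable fun k : ℕ => (k : ℝ) * ‖c k‖) :
    Summable fun k => ‖c k‖ := by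
  refine hc.of_nonneg_of_le (fun k => norm_nonneg _) fun k => ?_
  rcases k with _ | k
  · simp [hc0]
  · exact le_mul_of_one_le_left (norm_nonneg _) (by simp)

theorem summable_mul_pow_of_norm_le_one (ha : Summable fun k => ‖a k‖) (hz : ‖z‖ ≤ 1) :
    Summable fun k => a k * z ^ k :=
  .of_norm_bounded ha fun k => by
    rw [norm_mul, norm_pow]
    exact mul_le_of_le_one_right (norm_nonneg _) (pow_le_one₀ (norm_nonneg _) hz)

theorem norm_tsum_mul_pow_le (ha0 : a 0 = 0) (ha : Summable fun k => ‖a k‖) (hz : ‖z‖ ≤ 1) :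
    ‖∑' k, a k * z ^ k‖ ≤ (∑' k, ‖a k‖) * ‖z‖ := by
  rw [← tsum_mul_right]
  refine (norm_tsum_le_tsum_norm (summable_mul_pow_of_norm_le_one ha hz).norm).trans
    (Summable.tsum_le_tsum (fun k => ?_) (summable_mul_pow_of_norm_le_one ha hz).norm
      (ha.mul_right _))
  rcases k with _ | k
  · simp [ha0]
  · rw [norm_mul, norm_pow]
    exact mul_le_mul_of_nonneg_left (pow_le_of_le_one (norm_nonneg _) hz k.succ_ne_zero)
      (norm_nonneg _)

theorem hasDerivAt_tsum_mul_pow (ha : Summable fun k : ℕ => (k : ℝ) * ‖a k‖) (hz : ‖z‖ < 1) :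
    HasDerivAt (fun w => ∑' k, a k * w ^ k) (∑' k : ℕ, (k : 𝕜) * a k * z ^ (k - 1)) z := by
  refine hasDerivAt_tsum_of_isPreconnected (g := fun k w => a k * w ^ k)
    (g' := fun k w => (k : 𝕜) * a k * w ^ (k - 1)) ha isOpen_ball
    (convex_ball (0 : 𝕜) 1).isPreconnected (fun k w _ => ?_) (fun k w hw => ?_)
    (mem_ball_self one_pos) ?_ (mem_ball_zero_iff.mpr hz)
  · exact ((hasDerivAt_pow k w).const_mul (a k)).congr_deriv (by ring)
  · rw [norm_mul, norm_mul, norm_pow, RCLike.norm_natCast, mul_assoc]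
    exact mul_le_mul_of_nonneg_left (mul_le_of_le_one_right (norm_nonneg _)
      (pow_le_one₀ (norm_nonneg _) (mem_ball_zero_iff.mp hw).le)) k.cast_nonneg
  · exact summable_of_ne_finset_zero (s := {0}) fun k hk => by simp_all

theorem mul_tsum_nat_mul_pow_pred :
    z * ∑' k : ℕ, (k : 𝕜) * a k * z ^ (k - 1) = ∑' k : ℕ, (k : 𝕜) * a k * z ^ k := by
  rw [← tsum_mul_left]
  refine tsum_congr fun k => ?_
  rcases k with _ | k
  · simp
  · rw [Nat.add_sub_cancel, pow_succ]
    ring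

theorem mul_deriv_sub_eq_tsum {f : 𝕜 → 𝕜} (hf : ∀ w ∈ ball 0 1, f w = w + ∑' k, a k * w ^ k)
    (ha : Summable fun k => ‖a k‖) (hka : Summable fun k : ℕ => (k : ℝ) * ‖a k‖)
    (hz : z ∈ ball 0 1) :
    z * deriv f z - f z = ∑' k : ℕ, ((k : 𝕜) - 1) * a k * z ^ k := by
  have hz1 : ‖z‖ < 1 := mem_ball_zero_iff.mp hz
  have hderiv : deriv f z = 1 + ∑' k : ℕ, (k : 𝕜) * a k * z ^ (k - 1) := by
    have hfz : f =ᶠ[nhds z] fun w => w + ∑' k, a k * w ^ k :=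
      Filter.eventually_of_mem (isOpen_ball.mem_nhds hz) hf
    rw [hfz.deriv_eq]
    exact ((hasDerivAt_id z).add (hasDerivAt_tsum_mul_pow hka hz1)).deriv
  have hkaz : Summable fun k : ℕ => (k : 𝕜) * a k * z ^ k :=
    .of_norm_bounded hka fun k => by
      rw [norm_mul, norm_mul, norm_pow, RCLike.norm_natCast, mul_assoc]
      exact mul_le_mul_of_nonneg_left (mul_le_of_le_one_right (norm_nonneg _)
        (pow_le_one₀ (norm_nonneg _) hz1.le)) k.cast_nonneg
  rw [hderiv, hf z hz, mul_one_add, mul_tsum_nat_mul_pow_pred, add_sub_add_left_eq_sub,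
    ← hkaz.tsum_sub (summable_mul_pow_of_norm_le_one ha hz1.le)]
  exact tsum_congr fun k => by ring

theorem summable_nat_mul_norm_of_summable_weight (hβ : β ≤ 0) (hα : 0 ≤ α) (ha0 : a 0 = 0)
    (hsum : Summable fun k : ℕ => (α + β + k * (1 - β)) * ‖a k‖) :
    Summable fun k : ℕ => (k : ℝ) * ‖a k‖ := by
  refine hsum.of_nonneg_of_le (fun k => by positivity) fun k => ?_
  rcases k with _ | k
  · simp [ha0]
  · have hk : (0 : ℝ) ≤ k := k.cast_nonneg
    push_cast
    exact mul_le_mul_of_nonneg_right (by nlinarith) (norm_nonneg _)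

theorem weighted_norm_pred_mul_add_le (ha0 : a 0 = 0) (k : ℕ) :
    (1 - β) * ‖((k : 𝕜) - 1) * a k‖ + (α - 1) * ‖a k‖ ≤ (α + β + k * (1 - β)) * ‖a k‖ := by
  rcases k with _ | k
  · simp [ha0]
  · have hk : ‖((k + 1 : ℕ) : 𝕜) - 1‖ = k := by simp
    rw [norm_mul, hk]
    push_cast
    nlinarith [norm_nonneg (a k.succ)]

theorem weighted_norm_tsum_add_le (hβ : β ≤ 1) (hα : 1 ≤ α) (ha0 : a 0 = 0)
    (ha : Summable fun k => ‖a k‖) (hka : Summable fun k : ℕ => (k : ℝ) * ‖a k‖)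
    (hsum : Summable fun k : ℕ => (α + β + k * (1 - β)) * ‖a k‖) (hz : ‖z‖ ≤ 1) :
    (1 - β) * ‖∑' k : ℕ, ((k : 𝕜) - 1) * a k * z ^ k‖ + (α - 1) * ‖∑' k, a k * z ^ k‖ ≤
      (∑' k : ℕ, (α + β + k * (1 - β)) * ‖a k‖) * ‖z‖ := by
  have hc : Summable fun k : ℕ => ‖((k : 𝕜) - 1) * a k‖ := by
    refine hka.of_nonneg_of_le (fun k => norm_nonneg _) fun k => ?_
    rcases k with _ | k
    · simp [ha0]
    · rw [norm_mul]
      refine mul_le_mul_of_nonneg_right ?_ (norm_nonneg _)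
      simp
  calc (1 - β) * ‖∑' k : ℕ, ((k : 𝕜) - 1) * a k * z ^ k‖ + (α - 1) * ‖∑' k, a k * z ^ k‖
      ≤ (1 - β) * ((∑' k : ℕ, ‖((k : 𝕜) - 1) * a k‖) * ‖z‖) +
          (α - 1) * ((∑' k, ‖a k‖) * ‖z‖) := by
        refine add_le_add (mul_le_mul_of_nonneg_left ?_ (by linarith))
          (mul_le_mul_of_nonneg_left (norm_tsum_mul_pow_le ha0 ha hz) (by linarith))
        exact norm_tsum_mul_pow_le (a := fun k : ℕ => ((k : 𝕜) - 1) * a k) (by simp [ha0]) hc hz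
    _ = (∑' k : ℕ, ((1 - β) * ‖((k : 𝕜) - 1) * a k‖ + (α - 1) * ‖a k‖)) * ‖z‖ := by
        rw [(hc.mul_left _).tsum_add (ha.mul_left _), tsum_mul_left, tsum_mul_left]
        ring
    _ ≤ (∑' k : ℕ, (α + β + k * (1 - β)) * ‖a k‖) * ‖z‖ := by
        refine mul_le_mul_of_nonneg_right ?_ (norm_nonneg z)
        exact ((hc.mul_left _).add (ha.mul_left _)).tsum_le_tsum
          (weighted_norm_pred_mul_add_le ha0) hsum

end

theorem Complex.re_div_lt_of_mul_norm_sub_lt {α β : ℝ} {u v : ℂ} (hβ : β ≤ 1)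
    (h : (1 - β) * ‖u - v‖ < (α - 1) * ‖v‖) : (u / v).re < β * ‖u / v - 1‖ + α := by
  have hv : v ≠ 0 := by
    rintro rfl
    simp only [sub_zero, norm_zero, mul_zero] at h
    nlinarith [norm_nonneg u]
  have hnorm : ‖u / v - 1‖ * ‖v‖ = ‖u - v‖ := by
    rw [div_sub_one hv, norm_div, div_mul_cancel₀ _ (norm_ne_zero_iff.mpr hv)]
  have hlt : (1 - β) * ‖u / v - 1‖ < α - 1 :=
    lt_of_mul_lt_mul_right (by rwa [mul_assoc, hnorm]) (norm_nonneg v)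
  have hre : (u / v).re - 1 ≤ ‖u / v - 1‖ := by simpa using re_le_norm (u / v - 1)
  linarith

/-- Corollary 2.2: the case `p = 1`; a sufficient condition for `f ∈ MD(α,β)`. -/
theorem stmt_3 (α β : ℝ) (hβ : β ≤ 0) (hα : 1 < α)
    (f : ℂ → ℂ) (a : ℕ → ℂ)
    (ha0 : ∀ k, k ≤ 1 → a k = 0)
    (hfa : ∀ z ∈ ball (0 : ℂ) 1, f z = z + ∑' k : ℕ, a k * z ^ k)
    (hsum : Summable (fun k : ℕ => (α + β + (k : ℝ) * (1 - β)) * ‖a k‖))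
    (hlt : ∑' k : ℕ, (α + β + (k : ℝ) * (1 - β)) * ‖a k‖ < α - 1) :
    ∀ z ∈ ball (0 : ℂ) 1, z ≠ 0 →
      (z * deriv f z / f z).re < β * ‖z * deriv f z / f z - 1‖ + α := by
  intro z hz hz0
  have ha₀ : a 0 = 0 := ha0 0 zero_le_one
  have hka := summable_nat_mul_norm_of_summable_weight hβ (by linarith) ha₀ hsum
  have ha := summable_norm_of_summable_nat_mul_norm ha₀ hka
  have hz1 : ‖z‖ < 1 := mem_ball_zero_iff.mp hz
  have hest := weighted_norm_tsum_add_le (by linarith) hα.le ha₀ ha hka hsum hz1.le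
  have hS : (∑' k : ℕ, (α + β + k * (1 - β)) * ‖a k‖) * ‖z‖ < (α - 1) * ‖z‖ :=
    mul_lt_mul_of_pos_right hlt (norm_pos_iff.mpr hz0)
  have hfz : (α - 1) * (‖z‖ - ‖∑' k, a k * z ^ k‖) ≤ (α - 1) * ‖f z‖ := by
    rw [hfa z hz]
    exact mul_le_mul_of_nonneg_left (norm_sub_le_norm_add _ _) (by linarith)
  refine re_div_lt_of_mul_norm_sub_lt (by linarith) ?_
  rw [mul_deriv_sub_eq_tsum hfa ha hka hz]
  linarith
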